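/- arXiv:1711.05382 — 3 statements merged into one kernel-verified Lean document; each statement's English description precedes it below -/
import Mathlib

section
/- If P satisfies a drift condition P V ≤ γ V + K with γ ∈ (0,1), K > 0 and (P − P_ε)φ(x) ≤ ε(1 + δ V(x)) for all |φ| ≤ 1 + V with εδ < 1 − γ, then V is also a Lyapunov function for P_ε: P_ε V ≤ (γ + εδ) V + (K + ε), where γ + εδ < 1. -/
open MeasureTheory

/-- If `P` has drift `PV ≤ γV + K` and `|(P - Pε)φ(x)| ≤ ε(1+δV(x))` for all `|φ| ≤ 1+V` with
`εδ < 1-γ`, then `V` is also a Lyapunov function for `Pε`: `Pε V ≤ (γ+εδ)V + (K+ε)` with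
`γ + εδ < 1`. -/
theorem stmt_4 {X : Type*} [MeasurableSpace X]
    (P Pe : X → Measure X)
    (V : X → ℝ) (hV : ∀ x, 0 ≤ V x)
    (γ K ε δ : ℝ) (hγ0 : 0 < γ) (hγ1 : γ < 1) (hK : 0 < K) (hε : 0 ≤ ε) (hδ : 0 ≤ δ)
    (hed : ε * δ < 1 - γ)
    (hdrift : ∀ x : X, ∫ y, V y ∂(P x) ≤ γ * V x + K)
    (hclose : ∀ φ : X → ℝ, (∀ y, |φ y| ≤ 1 + V y) →
      ∀ x : X, |(∫ y, φ y ∂(P x)) - ∫ y, φ y ∂(Pe x)| ≤ ε * (1 + δ * V x)) :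
    (∀ x : X, ∫ y, V y ∂(Pe x) ≤ (γ + ε * δ) * V x + (K + ε)) ∧ γ + ε * δ < 1 := by
  constructor
  · intro x
    have hb : ∀ y, |V y| ≤ 1 + V y := fun y => by
      rw [abs_of_nonneg (hV y)]; linarith
    have h1 := hclose V hb x
    have h2 := hdrift x
    have h3 : (∫ y, V y ∂(Pe x)) - ∫ y, V y ∂(P x) ≤ ε * (1 + δ * V x) := by
      have := abs_le.mp h1
      linarith [this.1]
    nlinarith [hV x]
  · linarith
end

section
/- Suppose for every x, y there exists a coupling Γ_{x,y} of δ_x P and δ_y P such that Γ_{x,y}({(a,b) : |a−b| < γ}) ≥ α_γ > 0 for every γ > 0, and there is C < ∞ with d(δ_x P, δ_y P) ≤ C|x−y| whenever |x−y| < δ, where d(x,y) = min(1, |x−y|/δ) with δ < 1/C. Then there exists ᾱ < 1 such that d(δ_x P, δ_y P) ≤ ᾱ d(x,y) for all x, y, where d on measures is the Wasserstein dual of d. -/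
open MeasureTheory

/-- Wasserstein distance induced by a cost `d`: infimum over couplings. -/
noncomputable def wdist {X : Type*} [MeasurableSpace X] (d : X → X → ℝ)
    (μ ν : Measure X) : ℝ :=
  sInf { r : ℝ | ∃ Γ : Measure (X × X),
    Γ.map Prod.fst = μ ∧ Γ.map Prod.snd = ν ∧ r = ∫ p, d p.1 p.2 ∂Γ }

/-- Strict contraction in the localized Wasserstein metric `d(x,y) = min(1, |x-y|/δ)`
under a local Lipschitz condition and uniform topological irreducibility. -/
theorem stmt_5 {X : Type*} [NormedAddCommGroup X] [MeasurableSpace X]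
    (P : X → Measure X) (hP : ∀ x, IsProbabilityMeasure (P x))
    (δc C : ℝ) (hδ : 0 < δc) (hC : 0 < C) (hCδ : C * δc < 1)
    (hLip : ∀ x y : X, ‖x - y‖ < δc →
      wdist (fun a b => min 1 (‖a - b‖ / δc)) (P x) (P y) ≤ C * ‖x - y‖)
    (hcoup : ∀ γ : ℝ, 0 < γ → ∃ αγ : ℝ, 0 < αγ ∧ ∀ x y : X,
      ∃ Γ : Measure (X × X), Γ.map Prod.fst = P x ∧ Γ.map Prod.snd = P y ∧
        ENNReal.ofReal αγ ≤ Γ {p : X × X | ‖p.1 - p.2‖ < γ}) :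
    ∃ α : ℝ, 0 ≤ α ∧ α < 1 ∧ ∀ x y : X,
      wdist (fun a b => min 1 (‖a - b‖ / δc)) (P x) (P y) ≤ α * min 1 (‖x - y‖ / δc) := by

  obtain ⟨α₀, hα₀, hΓ⟩ := hcoup (δc / 2) (by linarith)
  set g : X × X → ℝ := fun p => min 1 (‖p.1 - p.2‖ / δc) with hgdef
  have hg0 : ∀ p, 0 ≤ g p := fun p =>
    le_min zero_le_one (div_nonneg (norm_nonneg _) hδ.le)
  have hg1 : ∀ p, g p ≤ 1 := fun p => min_le_left _ _
  refine ⟨max (C * δc) (1 - α₀ / 2), le_trans (by positivity) (le_max_left _ _),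
    max_lt hCδ (by linarith), ?_⟩
  intro x y
  have hbdd : BddBelow { r : ℝ | ∃ Γ : Measure (X × X),
      Γ.map Prod.fst = P x ∧ Γ.map Prod.snd = P y ∧ r = ∫ p, g p ∂Γ } := by
    refine ⟨0, fun r hr => ?_⟩
    obtain ⟨Γ, -, -, hr⟩ := hr
    exact hr ▸ integral_nonneg fun p => hg0 p
  by_cases hxy : ‖x - y‖ < δc
  · have h1 : ‖x - y‖ / δc < 1 := (div_lt_one hδ).2 hxy
    rw [min_eq_right h1.le]
    calc wdist (fun a b => min 1 (‖a - b‖ / δc)) (P x) (P y)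
        ≤ C * ‖x - y‖ := hLip x y hxy
      _ = (C * δc) * (‖x - y‖ / δc) := by field_simp
      _ ≤ max (C * δc) (1 - α₀ / 2) * (‖x - y‖ / δc) := by
          apply mul_le_mul_of_nonneg_right (le_max_left _ _)
          positivity
  · push_neg at hxy
    have hmin : min 1 (‖x - y‖ / δc) = 1 := min_eq_left ((one_le_div hδ).2 hxy)
    rw [hmin, mul_one]
    obtain ⟨Γ, hm1, hm2, hS⟩ := hΓ x y
    haveI hprob : IsProbabilityMeasure Γ := by
      constructor
      have := congrArg (fun m : Measure X => m Set.univ) hm1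
      simpa [Measure.map_apply measurable_fst MeasurableSet.univ,
        (hP x).measure_univ] using this
    have hle : wdist (fun a b => min 1 (‖a - b‖ / δc)) (P x) (P y) ≤ ∫ p, g p ∂Γ :=
      csInf_le hbdd ⟨Γ, hm1, hm2, rfl⟩
    refine hle.trans ?_
    by_cases hint : Integrable g Γ
    · set h : X × X → ℝ := fun p => 1 - g p with hhdef
      have hh_int : Integrable h Γ := (integrable_const 1).sub hint
      have hh0 : ∀ p, 0 ≤ h p := fun p => by simp [hhdef, hg1 p]
      have key : ENNReal.ofReal (α₀ / 2) ≤ ENNReal.ofReal (∫ p, h p ∂Γ) := by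
        rw [ofReal_integral_eq_lintegral_ofReal hh_int (Filter.Eventually.of_forall hh0)]
        have hsub : {p : X × X | ‖p.1 - p.2‖ < δc / 2} ⊆
            {p : X × X | ENNReal.ofReal (1/2) ≤ ENNReal.ofReal (h p)} := by
          intro p hp
          have hglt : g p ≤ 1/2 := by
            refine (min_le_right _ _).trans ?_
            rw [div_le_iff₀ hδ]
            simpa using hp.le.trans (by linarith)
          exact ENNReal.ofReal_le_ofReal (by simp [hhdef]; linarith)
        calc ENNReal.ofReal (α₀ / 2)
            = ENNReal.ofReal (1/2) * ENNReal.ofReal α₀ := by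
              rw [← ENNReal.ofReal_mul (by norm_num)]; ring_nf
          _ ≤ ENNReal.ofReal (1/2) * Γ {p : X × X | ‖p.1 - p.2‖ < δc / 2} :=
              mul_le_mul_right hS _
          _ ≤ ENNReal.ofReal (1/2) *
              Γ {p : X × X | ENNReal.ofReal (1/2) ≤ ENNReal.ofReal (h p)} :=
              mul_le_mul_right (measure_mono hsub) _
          _ ≤ ∫⁻ p, ENNReal.ofReal (h p) ∂Γ :=
              mul_meas_ge_le_lintegral₀ (hh_int.aemeasurable.ennreal_ofReal) _
      have hkey' : α₀ / 2 ≤ ∫ p, h p ∂Γ := by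
        have := (ENNReal.ofReal_le_ofReal_iff (integral_nonneg hh0)).1 key
        linarith
      have hsplit : ∫ p, g p ∂Γ = 1 - ∫ p, h p ∂Γ := by
        have : ∫ p, g p ∂Γ = ∫ p, ((1 : ℝ) - h p) ∂Γ := by
          congr 1; funext p; simp [hhdef]
        rw [this, integral_sub (integrable_const 1) hh_int]
        simp
      rw [hsplit]
      exact le_trans (by linarith) (le_max_right _ _)
    · rw [integral_undef hint]
      exact le_trans (by positivity) (le_max_left _ _)
end

section
/- Under the C-weak triangle inequality, strict contraction d̃(ν₁P, ν₂P) ≤ ᾱ d̃(ν₁,ν₂), the one-step closeness bound d̃(δ_x P, δ_x P_ε) ≤ ε(1 + δ V(x)), and the drift P_ε V ≤ γ_ε V + K_ε with γ_ε ∈ (0,1): for all n ≥ 1, d̃(δ_x P^n, δ_x P_ε^n) ≤ ε (Σ_{j=1}^n C^j ᾱ^{j−1}) (1 + δ(K_ε/(1−γ_ε) + V(x))). -/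
/-!
If `C < 1`, the weak triangle inequality forces `dt ≤ 0` everywhere: `(1 - C) dt(μ, μ)` is
bounded by a multiple of `dt(P^k μ, P^k μ) ≤ α^k dt(μ, μ)`, which tends to `0`.

If `C ≥ 1`, insert `P (Pε^n δ_x)` between `P^{n+1} δ_x` and `Pε^{n+1} δ_x`: the weak triangle
inequality and the contraction give `e_{n+1} ≤ C (α e_n + E)` for `e_n = dt(P^n δ_x, Pε^n δ_x)`,
where `E` bounds the one-step error along the orbit of `Pε`. The drift condition keeps `∫ V d(Pε^m δ_x) ≤ Kε/(1-γε) + V x`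
for every `m`, so `E = ε (1 + δ (Kε/(1-γε) + V x))` works, and unrolling the recursion yields
the geometric-type sum `∑ C^{j+1} α^j`.
-/

open MeasureTheory Filter Topology

lemma of_ae_dirac {X : Type*} [MeasurableSpace X] {x : X} {p : X → Prop}
    (h : ∀ᵐ y ∂Measure.dirac x, p y) : p x := by
  obtain ⟨s, hs, hsm, hsp⟩ := h.exists_measurable_mem
  exact hsp x ((mem_ae_dirac_iff hsm).1 hs)

-- `V` need not be measurable, in which case the integral is the junk value `0`.
lemma integral_dirac_le {X : Type*} [MeasurableSpace X] {V : X → ℝ} {x : X} (hx : 0 ≤ V x) :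
    ∫ y, V y ∂Measure.dirac x ≤ V x := by
  by_cases hV : AEStronglyMeasurable V (Measure.dirac x)
  · rw [integral_congr_ae hV.ae_eq_mk, integral_dirac' _ _ hV.stronglyMeasurable_mk,
      of_ae_dirac hV.ae_eq_mk]
  · rw [integral_non_aestronglyMeasurable hV]
    exact hx

lemma le_div_one_sub_add_of_le_mul_add {u : ℕ → ℝ} {γ K : ℝ} (hγ0 : 0 ≤ γ) (hγ1 : γ < 1)
    (hK : 0 ≤ K) (hu0 : 0 ≤ u 0) (hu : ∀ m, u (m + 1) ≤ γ * u m + K) (m : ℕ) :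
    u m ≤ K / (1 - γ) + u 0 := by
  induction m with
  | zero => simpa using div_nonneg hK (sub_pos.2 hγ1).le
  | succ m ih =>
    have hfix : γ * (K / (1 - γ)) + K = K / (1 - γ) := by
      field_simp [(sub_pos.2 hγ1).ne']
      ring
    nlinarith [hu m, mul_le_mul_of_nonneg_left ih hγ0]

lemma isProbabilityMeasure_iterate {X : Type*} [MeasurableSpace X] {Q : Measure X → Measure X}
    (hQ : ∀ μ, IsProbabilityMeasure μ → IsProbabilityMeasure (Q μ)) (μ : Measure X)
    [IsProbabilityMeasure μ] (m : ℕ) : IsProbabilityMeasure (Q^[m] μ) := by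
  induction m with
  | zero => exact ‹_›
  | succ m ih => rw [Function.iterate_succ_apply']; exact hQ _ ih

section WeakTriangle

variable {Y : Type*} {dt : Y → Y → ℝ} {C : ℝ}

lemma dt_iterate_le_pow_mul {P : Y → Y} {α : ℝ} (hα : 0 ≤ α)
    (hcontr : ∀ μ ν, dt (P μ) (P ν) ≤ α * dt μ ν) (k : ℕ) (μ ν : Y) :
    dt (P^[k] μ) (P^[k] ν) ≤ α ^ k * dt μ ν := by
  induction k with
  | zero => simp
  | succ k ih =>
    rw [Function.iterate_succ_apply', Function.iterate_succ_apply', pow_succ', mul_assoc]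
    exact (hcontr _ _).trans (mul_le_mul_of_nonneg_left ih hα)

lemma one_sub_mul_dt_self_le (hC0 : 0 ≤ C) (hC1 : C ≤ 1)
    (hwtri : ∀ μ ν ρ, dt μ ν ≤ C * (dt μ ρ + dt ρ ν)) (μ ρ : Y) :
    (1 - C) * dt μ μ ≤ 2 * C ^ 2 * dt ρ ρ := by
  have h₁ := hwtri μ μ ρ
  have h₂ := hwtri μ ρ ρ
  have h₃ := hwtri ρ μ ρ
  have hC1' : 0 ≤ 1 - C := sub_nonneg.2 hC1
  nlinarith [mul_le_mul_of_nonneg_left h₁ hC1', mul_le_mul_of_nonneg_left h₂ hC0,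
    mul_le_mul_of_nonneg_left h₃ hC0]

lemma dt_self_nonpos (hC0 : 0 ≤ C) (hC1 : C < 1)
    (hwtri : ∀ μ ν ρ, dt μ ν ≤ C * (dt μ ρ + dt ρ ν)) {P : Y → Y} {α : ℝ} (hα0 : 0 ≤ α)
    (hα1 : α < 1) (hcontr : ∀ μ ν, dt (P μ) (P ν) ≤ α * dt μ ν) (μ : Y) : dt μ μ ≤ 0 := by
  by_contra! hμ
  have hsmall : ∀ᶠ k in atTop, 2 * C ^ 2 * α ^ k < 1 - C := by
    have := (tendsto_pow_atTop_nhds_zero_of_lt_one hα0 hα1).const_mul (2 * C ^ 2)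
    rw [mul_zero] at this
    exact this.eventually (gt_mem_nhds (sub_pos.2 hC1))
  obtain ⟨k, hk⟩ := hsmall.exists
  have hbound := (one_sub_mul_dt_self_le hC0 hC1.le hwtri μ (P^[k] μ)).trans
    (mul_le_mul_of_nonneg_left (dt_iterate_le_pow_mul hα0 hcontr k μ μ) (by positivity))
  nlinarith

lemma dt_nonpos (hC0 : 0 ≤ C) (hC1 : C < 1)
    (hwtri : ∀ μ ν ρ, dt μ ν ≤ C * (dt μ ρ + dt ρ ν)) {P : Y → Y} {α : ℝ} (hα0 : 0 ≤ α)
    (hα1 : α < 1) (hcontr : ∀ μ ν, dt (P μ) (P ν) ≤ α * dt μ ν) (μ ν : Y) : dt μ ν ≤ 0 := by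
  have := hwtri μ ν μ
  nlinarith [dt_self_nonpos hC0 hC1 hwtri hα0 hα1 hcontr μ]

lemma dt_iterate_le_of_step (hC : 1 ≤ C) (hwtri : ∀ μ ν ρ, dt μ ν ≤ C * (dt μ ρ + dt ρ ν))
    {P Q : Y → Y} {α : ℝ} (hα : 0 ≤ α) (hcontr : ∀ μ ν, dt (P μ) (P ν) ≤ α * dt μ ν)
    {E : ℝ} (hE0 : 0 ≤ E) {μ : Y} (hE : ∀ m, dt (P (Q^[m] μ)) (Q (Q^[m] μ)) ≤ E)
    {n : ℕ} (hn : 1 ≤ n) :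
    dt (P^[n] μ) (Q^[n] μ) ≤ E * ∑ j ∈ Finset.range n, C ^ (j + 1) * α ^ j := by
  induction n, hn using Nat.le_induction with
  | base => simpa using (hE 0).trans (le_mul_of_one_le_right hE0 hC)
  | succ n _ ih =>
    rw [Finset.sum_range_succ', Function.iterate_succ_apply', Function.iterate_succ_apply']
    calc dt (P (P^[n] μ)) (Q (Q^[n] μ))
        ≤ C * (dt (P (P^[n] μ)) (P (Q^[n] μ)) + dt (P (Q^[n] μ)) (Q (Q^[n] μ))) := hwtri _ _ _
      _ ≤ C * (α * (E * ∑ j ∈ Finset.range n, C ^ (j + 1) * α ^ j) + E) := by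
        gcongr
        · exact (hcontr _ _).trans (mul_le_mul_of_nonneg_left ih hα)
        exact hE n
      _ = E * (∑ j ∈ Finset.range n, C ^ (j + 1 + 1) * α ^ (j + 1) + C ^ (0 + 1) * α ^ 0) := by
        rw [mul_add, mul_add, Finset.mul_sum, Finset.mul_sum, Finset.mul_sum, Finset.mul_sum]
        congr 1
        · exact Finset.sum_congr rfl fun j _ => by ring
        · ring

end WeakTriangle

theorem stmt_10_general {X : Type*} [MeasurableSpace X]
    (dt : Measure X → Measure X → ℝ)
    (P Pe : Measure X → Measure X)
    (hprobPe : ∀ μ : Measure X, IsProbabilityMeasure μ → IsProbabilityMeasure (Pe μ))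
    (V : X → ℝ) (hV : ∀ x, 0 ≤ V x)
    (C α ε δ γe Ke : ℝ) (hC : 0 < C) (hα0 : 0 < α) (hα1 : α < 1)
    (hε : 0 ≤ ε) (hδ : 0 ≤ δ) (hγe0 : 0 < γe) (hγe1 : γe < 1) (hKe : 0 < Ke)
    (hwtri : ∀ μ ν ρ : Measure X, dt μ ν ≤ C * (dt μ ρ + dt ρ ν))
    (hcontr : ∀ μ ν : Measure X, dt (P μ) (P ν) ≤ α * dt μ ν)
    (hclose : ∀ μ : Measure X, IsProbabilityMeasure μ →
      dt (P μ) (Pe μ) ≤ ε * (1 + δ * ∫ x, V x ∂μ))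
    (hdrift : ∀ μ : Measure X, IsProbabilityMeasure μ →
      ∫ x, V x ∂(Pe μ) ≤ γe * ∫ x, V x ∂μ + Ke) :
    ∀ n : ℕ, 1 ≤ n → ∀ x : X,
      dt (P^[n] (Measure.dirac x)) (Pe^[n] (Measure.dirac x)) ≤
        ε * (∑ j ∈ Finset.range n, C ^ (j + 1) * α ^ j)
          * (1 + δ * (Ke / (1 - γe) + V x)) := by
  intro n hn x
  have hγe : 0 < 1 - γe := sub_pos.2 hγe1
  set M := Ke / (1 - γe) + V x
  have hM : 0 ≤ M := add_nonneg (div_nonneg hKe.le hγe.le) (hV x)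
  rcases lt_or_ge C 1 with hC1 | hC1
  · exact (dt_nonpos hC.le hC1 hwtri hα0.le hα1 hcontr _ _).trans (by positivity)
  have hprob := isProbabilityMeasure_iterate hprobPe (Measure.dirac x)
  have hdrift' : ∀ m, ∫ y, V y ∂(Pe^[m + 1] (Measure.dirac x))
      ≤ γe * ∫ y, V y ∂(Pe^[m] (Measure.dirac x)) + Ke := fun m => by
    rw [Function.iterate_succ_apply']
    exact hdrift _ (hprob m)
  have hVM : ∀ m, ∫ y, V y ∂(Pe^[m] (Measure.dirac x)) ≤ M := fun m =>
    calc _ ≤ Ke / (1 - γe) + ∫ y, V y ∂(Pe^[0] (Measure.dirac x)) :=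
          le_div_one_sub_add_of_le_mul_add (u := fun m => ∫ y, V y ∂(Pe^[m] (Measure.dirac x)))
            hγe0.le hγe1 hKe.le (integral_nonneg hV) hdrift' m
      _ ≤ M := add_le_add_right (integral_dirac_le (hV x)) _
  have hstep : ∀ m, dt (P (Pe^[m] (Measure.dirac x))) (Pe (Pe^[m] (Measure.dirac x)))
      ≤ ε * (1 + δ * M) := fun m =>
    (hclose _ (hprob m)).trans (by gcongr; exact hVM m)
  calc _ ≤ ε * (1 + δ * M) * ∑ j ∈ Finset.range n, C ^ (j + 1) * α ^ j :=
        dt_iterate_le_of_step hC1 hwtri hα0.le hcontr (by positivity) hstep hn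
    _ = _ := by ring

/-- n-step closeness bound under a weak triangle inequality, strict contraction,
one-step closeness, and a drift condition for `Pε`. -/
theorem stmt_10 {X : Type*} [MeasurableSpace X]
    (dt : Measure X → Measure X → ℝ)
    (P Pe : Measure X → Measure X)
    (hprobP : ∀ μ : Measure X, IsProbabilityMeasure μ → IsProbabilityMeasure (P μ))
    (hprobPe : ∀ μ : Measure X, IsProbabilityMeasure μ → IsProbabilityMeasure (Pe μ))
    (V : X → ℝ) (hV : ∀ x, 0 ≤ V x)
    (C α ε δ γe Ke : ℝ) (hC : 0 < C) (hα0 : 0 < α) (hα1 : α < 1)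
    (hε : 0 ≤ ε) (hδ : 0 ≤ δ) (hγe0 : 0 < γe) (hγe1 : γe < 1) (hKe : 0 < Ke)
    (hwtri : ∀ μ ν ρ : Measure X, dt μ ν ≤ C * (dt μ ρ + dt ρ ν))
    (hcontr : ∀ μ ν : Measure X, dt (P μ) (P ν) ≤ α * dt μ ν)
    (hclose : ∀ μ : Measure X, IsProbabilityMeasure μ →
      dt (P μ) (Pe μ) ≤ ε * (1 + δ * ∫ x, V x ∂μ))
    (hdrift : ∀ μ : Measure X, IsProbabilityMeasure μ →
      ∫ x, V x ∂(Pe μ) ≤ γe * ∫ x, V x ∂μ + Ke) :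
    ∀ n : ℕ, 1 ≤ n → ∀ x : X,
      dt (P^[n] (Measure.dirac x)) (Pe^[n] (Measure.dirac x)) ≤
        ε * (∑ j ∈ Finset.range n, C ^ (j + 1) * α ^ j)
          * (1 + δ * (Ke / (1 - γe) + V x)) :=
  stmt_10_general dt P Pe hprobPe V hV C α ε δ γe Ke hC hα0 hα1 hε hδ hγe0 hγe1 hKe hwtri hcontr
    hclose hdrift
end
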